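/- There exists a constant c > 0 such that for all integers n ≥ 1, |C_n · √π · n^(3/2) / 4^n − 1| ≤ c/n; in other words C_n = (4^n / (n^(3/2)·√π)) · (1 + O(1/n)) as n → ∞. -/

import Mathlib

open Real Filter Stirling Nat Topology

noncomputable def bseq (n : ℕ) : ℝ :=
  (Nat.centralBinom n : ℝ) * Real.sqrt π * Real.sqrt n / 4 ^ n

private lemma aux_alg (n : ℕ) (cb A B s s2 q e4 p : ℝ)
    (hA : 0 < A) (hcb : cb * A * A = B) (hs2sq : s2 ^ 2 = 2 * n) (hs : s ^ 2 = n)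
    (hq : 0 < q) (hs2 : 0 < s2) (h4 : (0:ℝ) < e4) (hsq : 0 < s) :
    cb * p * s / e4 = p * (B / (2 * s * (e4 * q ^ 2))) / (A / (s2 * q)) ^ 2 := by
  rw [div_pow, mul_pow, hs2sq]
  field_simp
  rw [← hcb]
  linear_combination (cb * p * A ^ 2) * hs

lemma bseq_eq (n : ℕ) (hn : 1 ≤ n) :
    bseq n = Real.sqrt π * stirlingSeq (2 * n) / (stirlingSeq n) ^ 2 := by
  have hn0 : (0:ℝ) < n := by exact_mod_cast hn
  have hsq : (0:ℝ) < Real.sqrt n := Real.sqrt_pos.mpr hn0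
  have hA : (0:ℝ) < (n ! : ℝ) := by exact_mod_cast n.factorial_pos
  have hcb : (Nat.centralBinom n : ℝ) * (n ! : ℝ) * (n ! : ℝ) = ((2*n)! : ℝ) := by
    have h := Nat.choose_mul_factorial_mul_factorial (by omega : n ≤ 2*n)
    rw [show 2*n - n = n by omega] at h
    rw [Nat.centralBinom]
    exact_mod_cast congrArg (Nat.cast : ℕ → ℝ) h
  rw [bseq, stirlingSeq, stirlingSeq]
  push_cast
  have h1 : Real.sqrt (2 * (2 * (n:ℝ))) = 2 * Real.sqrt n := by
    rw [show 2 * (2 * (n:ℝ)) = 2^2 * n by ring, Real.sqrt_mul (by positivity),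
      Real.sqrt_sq (by norm_num)]
  have h3 : ((2 * (n:ℝ)) / Real.exp 1) ^ (2*n) = 4 ^ n * ((n:ℝ) / Real.exp 1) ^ (2*n) := by
    rw [show (2 * (n:ℝ)) / Real.exp 1 = 2 * ((n:ℝ)/Real.exp 1) by ring, mul_pow, pow_mul]
    norm_num
  have h4 : ((n:ℝ)/Real.exp 1) ^ (2*n) = (((n:ℝ)/Real.exp 1) ^ n)^2 := by
    rw [← pow_mul, mul_comm]
  rw [h1, h3, h4]
  exact aux_alg n _ _ _ _ _ _ _ _ hA hcb (Real.sq_sqrt (by positivity))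
    (Real.sq_sqrt hn0.le) (by positivity) (Real.sqrt_pos.mpr (by positivity))
    (by positivity) hsq

lemma tendsto_bseq : Tendsto bseq atTop (𝓝 1) := by
  have hpi : (0:ℝ) < π := pi_pos
  have h := Stirling.tendsto_stirlingSeq_sqrt_pi
  have h2n : Tendsto (fun n : ℕ => 2 * n) atTop atTop :=
    tendsto_atTop_mono (fun n => Nat.le_mul_of_pos_left n (by norm_num)) tendsto_id
  have h2 : Tendsto (fun n => stirlingSeq (2 * n)) atTop (𝓝 (Real.sqrt π)) := h.comp h2n
  have hlim : Tendsto (fun n => Real.sqrt π * stirlingSeq (2*n) / (stirlingSeq n)^2)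
      atTop (𝓝 (Real.sqrt π * Real.sqrt π / (Real.sqrt π)^2)) :=
    (tendsto_const_nhds.mul h2).div (h.pow 2) (by positivity)
  have hval : Real.sqrt π * Real.sqrt π / (Real.sqrt π)^2 = 1 := by
    rw [Real.sq_sqrt hpi.le, Real.mul_self_sqrt hpi.le, div_self hpi.ne']
  rw [hval] at hlim
  refine hlim.congr' ?_
  filter_upwards [eventually_ge_atTop 1] with n hn
  exact (bseq_eq n hn).symm

lemma bseq_pos (n : ℕ) (hn : 1 ≤ n) : 0 < bseq n := by
  have h1 : 0 < Nat.centralBinom n := n.centralBinom_pos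
  have h2 : (0:ℝ) < (Nat.centralBinom n : ℝ) := by exact_mod_cast h1
  have hn0 : (0:ℝ) < n := by exact_mod_cast hn
  have := pi_pos
  rw [bseq]; positivity

lemma bseq_succ (n : ℕ) (hn : 1 ≤ n) :
    bseq (n+1) = bseq n * ((2*n+1)/(2*n+2) * (Real.sqrt (n+1) / Real.sqrt n)) := by
  have hn0 : (0:ℝ) < n := by exact_mod_cast hn
  have hsq : (0:ℝ) < Real.sqrt n := Real.sqrt_pos.mpr hn0
  have hcb : ((n:ℝ)+1) * (Nat.centralBinom (n+1) : ℝ)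
      = 2 * (2*n+1) * (Nat.centralBinom n : ℝ) := by
    exact_mod_cast congrArg (Nat.cast : ℕ → ℝ) (Nat.succ_mul_centralBinom_succ n)
  have hcb' : (Nat.centralBinom (n+1) : ℝ)
      = 2 * (2*n+1) * (Nat.centralBinom n : ℝ) / ((n:ℝ)+1) := by
    field_simp
    linarith [hcb]
  rw [bseq, bseq, hcb']
  push_cast
  field_simp
  ring

lemma r_bounds (n : ℕ) (hn : 1 ≤ n) :
    1 ≤ (2*(n:ℝ)+1)/(2*n+2) * (Real.sqrt (n+1) / Real.sqrt n) ∧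
    (2*(n:ℝ)+1)/(2*n+2) * (Real.sqrt (n+1) / Real.sqrt n)
      ≤ 1 + 1/(8*n*(n+1)) := by
  have hn0 : (0:ℝ) < n := by exact_mod_cast hn
  have hsq : (0:ℝ) < Real.sqrt n := Real.sqrt_pos.mpr hn0
  have hsq1 : (0:ℝ) < Real.sqrt (n+1) := Real.sqrt_pos.mpr (by linarith)
  set r : ℝ := (2*(n:ℝ)+1)/(2*n+2) * (Real.sqrt (n+1) / Real.sqrt n) with hr
  have hrpos : 0 < r := by positivity
  have hr2 : r^2 = 1 + 1/(4*n*(n+1)) := by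
    rw [hr, mul_pow, div_pow, div_pow, Real.sq_sqrt (by positivity : (0:ℝ) ≤ (n:ℝ)+1),
      Real.sq_sqrt hn0.le]
    field_simp
    ring
  constructor
  · have h1 : r = Real.sqrt (1 + 1/(4*(n:ℝ)*(n+1))) := by
      rw [← hr2, Real.sqrt_sq hrpos.le]
    rw [h1]
    calc (1:ℝ) = Real.sqrt 1 := Real.sqrt_one.symm
      _ ≤ Real.sqrt (1 + 1/(4*(n:ℝ)*(n+1))) := Real.sqrt_le_sqrt (by
          have : (0:ℝ) < 1/(4*(n:ℝ)*(n+1)) := by positivity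
          linarith)
  · have hδ : (0:ℝ) < 1/(8*(n:ℝ)*(n+1)) := by positivity
    have h1 : r = Real.sqrt (1 + 1/(4*(n:ℝ)*(n+1))) := by
      rw [← hr2, Real.sqrt_sq hrpos.le]
    rw [h1]
    calc Real.sqrt (1 + 1/(4*(n:ℝ)*(n+1)))
        ≤ Real.sqrt ((1 + 1/(8*(n:ℝ)*(n+1)))^2) := by
          apply Real.sqrt_le_sqrt
          have h2 : (0:ℝ) < (n:ℝ)*((n:ℝ)+1) := by positivity
          have h3 : (1 + 1/(8*(n:ℝ)*(n+1)))^2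
              = 1 + 1/(4*(n:ℝ)*(n+1)) + (1/(8*(n:ℝ)*(n+1)))^2 := by
            field_simp
            ring
          nlinarith [sq_nonneg (1/(8*(n:ℝ)*(n+1)))]
      _ = 1 + 1/(8*(n:ℝ)*(n+1)) := Real.sqrt_sq (by positivity)

lemma bseq_mono (n N : ℕ) (hn : 1 ≤ n) (hN : n ≤ N) : bseq n ≤ bseq N := by
  induction N, hN using Nat.le_induction with
  | base => exact le_rfl
  | succ N hNn ih =>
    have hN1 : 1 ≤ N := le_trans hn hNn
    rw [bseq_succ N hN1]
    have h1 := (r_bounds N hN1).1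
    have hp := bseq_pos N hN1
    nlinarith

lemma bseq_le_one (n : ℕ) (hn : 1 ≤ n) : bseq n ≤ 1 :=
  ge_of_tendsto tendsto_bseq (eventually_atTop.2 ⟨n, fun N hN => bseq_mono n N hn hN⟩)

lemma bseq_partial (n : ℕ) (hn : 1 ≤ n) :
    ∀ N, n ≤ N → bseq N ≤ bseq n + 1/(8*(n:ℝ)) - 1/(8*(N:ℝ)) := by
  intro N hN
  induction N, hN using Nat.le_induction with
  | base => simp
  | succ N hNn ih =>
    have hN1 : 1 ≤ N := le_trans hn hNn
    have hN0 : (0:ℝ) < N := by exact_mod_cast hN1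
    have hn0 : (0:ℝ) < n := by exact_mod_cast hn
    rw [bseq_succ N hN1]
    have h1 := (r_bounds N hN1).1
    have h2 := (r_bounds N hN1).2
    have hp := bseq_pos N hN1
    have hle := bseq_le_one N hN1
    have key : bseq N * ((2*(N:ℝ)+1)/(2*N+2) * (Real.sqrt (N+1) / Real.sqrt N))
        ≤ bseq N + 1/(8*(N:ℝ)*(N+1)) := by nlinarith
    have harith : 1/(8*(N:ℝ)) - 1/(8*(N:ℝ)*(N+1)) = 1/(8*((N:ℝ)+1)) := by
      field_simp
      ring
    have : bseq N + 1/(8*(N:ℝ)*(N+1)) ≤ bseq n + 1/(8*(n:ℝ)) - 1/(8*((N:ℝ)+1)) := by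
      rw [← harith]; linarith
    push_cast
    linarith

lemma one_sub_le (n : ℕ) (hn : 1 ≤ n) : 1 - 1/(8*(n:ℝ)) ≤ bseq n := by
  have hn0 : (0:ℝ) < n := by exact_mod_cast hn
  have h : (1:ℝ) ≤ bseq n + 1/(8*(n:ℝ)) := by
    refine le_of_tendsto tendsto_bseq (eventually_atTop.2 ⟨n, fun N hN => ?_⟩)
    have hN0 : (0:ℝ) < N := by exact_mod_cast le_trans hn hN
    have := bseq_partial n hn N hN
    have : (0:ℝ) < 1/(8*(N:ℝ)) := by positivity
    linarith [bseq_partial n hn N hN]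
  linarith

/-- **Catalan asymptotics.** There is `c > 0` with
`|C_n √π n^(3/2) / 4^n - 1| ≤ c/n` for all `n ≥ 1`; i.e.
`C_n = (4^n / (n^(3/2) √π)) (1 + O(1/n))` as `n → ∞`. -/
theorem catalan_asymptotics :
    ∃ c : ℝ, 0 < c ∧ ∀ n : ℕ, 1 ≤ n →
      |(catalan n : ℝ) * Real.sqrt π * (n : ℝ) ^ ((3 : ℝ)/2) / 4 ^ n - 1| ≤ c / n := by
  refine ⟨2, by norm_num, fun n hn => ?_⟩
  have hn0 : (0:ℝ) < n := by exact_mod_cast hn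
  have hsq : (0:ℝ) < Real.sqrt n := Real.sqrt_pos.mpr hn0
  have hpow : (n:ℝ) ^ ((3:ℝ)/2) = (n:ℝ) * Real.sqrt n := by
    rw [show (3:ℝ)/2 = 1 + 1/2 by norm_num, Real.rpow_add hn0, Real.rpow_one,
      ← Real.sqrt_eq_rpow]
  have hcat : ((n:ℝ)+1) * (catalan n : ℝ) = (Nat.centralBinom n : ℝ) := by
    exact_mod_cast congrArg (Nat.cast : ℕ → ℝ) (succ_mul_catalan_eq_centralBinom n)
  have hcat' : (catalan n : ℝ) = (Nat.centralBinom n : ℝ) / ((n:ℝ)+1) := by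
    field_simp; linarith
  have ha : (catalan n : ℝ) * Real.sqrt π * (n : ℝ) ^ ((3 : ℝ)/2) / 4 ^ n
      = bseq n * ((n:ℝ)/((n:ℝ)+1)) := by
    rw [hpow, hcat', bseq]
    field_simp
  rw [ha]
  have hb1 := bseq_le_one n hn
  have hb2 := one_sub_le n hn
  have hbpos := bseq_pos n hn
  rw [abs_le]
  constructor
  · -- -(2/n) ≤ bseq n * (n/(n+1)) - 1 i.e. 1 - 2/n ≤ ...
    have h8 : (0:ℝ) < 8*(n:ℝ) := by positivity
    have hfrac : (0:ℝ) < (n:ℝ)/((n:ℝ)+1) := by positivity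
    rw [neg_le, neg_sub]
    have : 1 - bseq n * ((n:ℝ)/((n:ℝ)+1)) ≤ 2/(n:ℝ) := by
      have key : (1 - 1/(8*(n:ℝ))) * ((n:ℝ)/((n:ℝ)+1)) ≤ bseq n * ((n:ℝ)/((n:ℝ)+1)) :=
        mul_le_mul_of_nonneg_right hb2 hfrac.le
      have e : 1 - (1 - 1/(8*(n:ℝ)))*((n:ℝ)/((n:ℝ)+1)) = 9/(8*((n:ℝ)+1)) := by
        field_simp
        ring
      have expand : 1 - (1 - 1/(8*(n:ℝ))) * ((n:ℝ)/((n:ℝ)+1)) ≤ 2/(n:ℝ) := by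
        rw [e, div_le_div_iff₀ (by positivity) hn0]
        nlinarith
      linarith
    linarith
  · have : bseq n * ((n:ℝ)/((n:ℝ)+1)) ≤ 1 := by
      have hfrac : (n:ℝ)/((n:ℝ)+1) ≤ 1 := by
        rw [div_le_one (by linarith)]; linarith
      have hfrac0 : (0:ℝ) ≤ (n:ℝ)/((n:ℝ)+1) := by positivity
      calc bseq n * ((n:ℝ)/((n:ℝ)+1)) ≤ 1 * 1 :=
        mul_le_mul hb1 hfrac hfrac0 (by norm_num)
        _ = 1 := by norm_num
    have h2n : (0:ℝ) < 2/(n:ℝ) := by positivity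
    linarith
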